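/- Let X be the Jacobi matrix of the quantum harmonic oscillator, i.e. of the Jacobi sequence ω n = n + 1 and α n = 0 (so X e_n = √(n+1)·e_{n+1} + √n·e_{n−1}). Then for every natural number m, the normalized moments converge to the moments of the arcsine law: lim_{k→∞} ⟨X^m e_k, e_k⟩ / (2k+1)^{m/2} = ∫_{−√2}^{√2} x^m/(π√(2−x²)) dx. -/

import Mathlib

/-!
`⟨X^m e_k, e_k⟩` is a sum, over the `±1` walks of length `m` from `k` back to `k`, of the
products of the weights `√(n + 1)` of the edges `{n, n + 1}` crossed. For `m ≤ k` these edges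
satisfy `k - m ≤ n < k + m`, so the moment lies between `c_m (k - m + 1)^{m/2}` and
`c_m (k + m)^{m/2}`, where `c_m` is the number of such walks. After dividing by
`(2k + 1)^{m/2}` both bounds tend to `c_m / 2^{m/2}`, which is `C(m, m/2) / 2^{m/2}` for even `m`
and `0` for odd `m`; the substitution `x = √2 sin θ` and Wallis' integrals identify these
numbers with the moments of the arcsine law.
-/

open Filter

/-- The Jacobi matrix of a Jacobi sequence `(ω, α)`, acting on finitely supported
real sequences indexed by `ℕ`:
`X e_n = √(ω n)·e_{n+1} + α n·e_n + √(ω (n-1))·e_{n-1}`, last term omitted for `n = 0`. -/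
noncomputable def jacobiOp (ω α : ℕ → ℝ) : (ℕ →₀ ℝ) →ₗ[ℝ] (ℕ →₀ ℝ) :=
  Finsupp.lsum ℝ fun n => LinearMap.toSpanSingleton ℝ (ℕ →₀ ℝ)
    (Real.sqrt (ω n) • Finsupp.single (n + 1) 1 + α n • Finsupp.single n 1 +
      if n = 0 then 0 else Real.sqrt (ω (n - 1)) • Finsupp.single (n - 1) 1)

open Set Real MeasureTheory

/-- The number of walks with `m` steps `±1` from `0` to `d`. -/
def pathCount : ℕ → ℤ → ℕ
  | 0, d => if d = 0 then 1 else 0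
  | m + 1, d => pathCount m (d - 1) + pathCount m (d + 1)

theorem abs_le_of_pathCount_ne_zero {m : ℕ} {d : ℤ} (h : pathCount m d ≠ 0) : |d| ≤ m := by
  induction m generalizing d with
  | zero =>
    simp only [pathCount, ne_eq, ite_eq_right_iff, not_forall] at h
    simp [h.1]
  | succ m ih =>
    rw [abs_le]
    have : pathCount m (d - 1) ≠ 0 ∨ pathCount m (d + 1) ≠ 0 := by rw [pathCount] at h; omega
    rcases this with h | h <;> have := abs_le.mp (ih h) <;> push_cast <;> omega

theorem pathCount_eq_zero_of_odd {m : ℕ} {d : ℤ} (h : Odd (m + d)) : pathCount m d = 0 := by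
  induction m generalizing d with
  | zero =>
    simp only [pathCount, ite_eq_right_iff]
    rintro rfl
    simp at h
  | succ m ih =>
    obtain ⟨r, hr⟩ := h
    rw [pathCount, ih ⟨r - 1, by push_cast at hr; omega⟩, ih ⟨r, by push_cast at hr; omega⟩]

theorem pathCount_two_mul_sub (m t : ℕ) : pathCount m (2 * t - m) = m.choose t := by
  induction m generalizing t with
  | zero =>
    rcases t with _ | t <;> simp [pathCount]
    omega
  | succ m ih =>
    rw [pathCount]
    rcases t with _ | t
    · have hfar : pathCount m (2 * (0 : ℕ) - (m + 1 : ℕ) - 1) = 0 := by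
        by_contra h
        have := abs_le.mp (abs_le_of_pathCount_ne_zero h)
        omega
      rw [hfar, show 2 * ((0 : ℕ) : ℤ) - (m + 1 : ℕ) + 1 = 2 * (0 : ℕ) - m by push_cast; ring, ih]
      simp
    · rw [show 2 * ((t + 1 : ℕ) : ℤ) - (m + 1 : ℕ) - 1 = 2 * t - m by push_cast; ring,
        show 2 * ((t + 1 : ℕ) : ℤ) - (m + 1 : ℕ) + 1 = 2 * (t + 1 : ℕ) - m by push_cast; ring,
        ih, ih, Nat.choose_succ_succ']

theorem mul_mem_Icc_mul_pow_succ {c a b w v : ℝ} {m : ℕ} (hc : 0 ≤ c) (ha : 0 ≤ a) (hw : 0 ≤ w)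
    (hwab : c ≠ 0 → w ∈ Icc a b) (hv : v ∈ Icc (c * a ^ m) (c * b ^ m)) :
    w * v ∈ Icc (c * a ^ (m + 1)) (c * b ^ (m + 1)) := by
  rcases eq_or_ne c 0 with rfl | hc0
  · obtain rfl : v = 0 := by simpa using hv
    simp
  obtain ⟨haw, hwb⟩ := hwab hc0
  rw [pow_succ, pow_succ, ← mul_assoc, ← mul_assoc, mul_comm w]
  have hv0 : 0 ≤ v := (by positivity : 0 ≤ c * a ^ m).trans hv.1
  exact ⟨mul_le_mul hv.1 haw ha hv0, mul_le_mul hv.2 hwb hw (hv0.trans hv.2)⟩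

section Jacobi

variable (ω α : ℕ → ℝ)

theorem jacobiOp_single (n : ℕ) (b : ℝ) :
    jacobiOp ω α (Finsupp.single n b) = b • (√(ω n) • Finsupp.single (n + 1) 1 +
      α n • Finsupp.single n 1 +
      if n = 0 then 0 else √(ω (n - 1)) • Finsupp.single (n - 1) 1) := by
  rw [jacobiOp, Finsupp.lsum_single]
  rfl

theorem jacobiOp_apply_zero (v : ℕ →₀ ℝ) :
    jacobiOp ω α v 0 = α 0 * v 0 + √(ω 0) * v 1 := by
  induction v using Finsupp.induction_linear with
  | zero => simp
  | add f g hf hg => simp only [map_add, Finsupp.add_apply, hf, hg]; ring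
  | single n b =>
    rw [jacobiOp_single]
    rcases n with _ | _ | n <;> simp <;> ring

theorem jacobiOp_apply_succ (v : ℕ →₀ ℝ) (j : ℕ) :
    jacobiOp ω α v (j + 1) =
      √(ω j) * v j + α (j + 1) * v (j + 1) + √(ω (j + 1)) * v (j + 2) := by
  induction v using Finsupp.induction_linear with
  | zero => simp
  | add f g hf hg => simp only [map_add, Finsupp.add_apply, hf, hg]; ring
  | single n b =>
    rw [jacobiOp_single]
    rcases n with _ | n
    · rcases j with _ | j <;> simp
      ring
    · simp only [Nat.add_one_ne_zero, if_false, Nat.add_sub_cancel, Finsupp.smul_apply,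
        Finsupp.add_apply, Finsupp.single_apply, smul_eq_mul]
      split_ifs <;> simp only [Nat.add_right_cancel_iff] at * <;> subst_vars <;>
        first | omega | ring

end Jacobi

theorem jacobiOp_pow_single_apply_mem_Icc {ω : ℕ → ℝ} {a b : ℝ} {k M : ℕ} (ha : 0 ≤ a)
    (hMk : M ≤ k) (hω : ∀ n, k ≤ n + M → n < k + M → √(ω n) ∈ Icc a b) :
    ∀ m ≤ M, ∀ j : ℕ, (jacobiOp ω (fun _ => 0) ^ m) (Finsupp.single k 1) j ∈
      Icc (pathCount m (j - k) * a ^ m) (pathCount m (j - k) * b ^ m) := by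
  intro m
  induction m with
  | zero =>
    intro _ j
    rcases eq_or_ne j k with rfl | hjk
    · simp [pathCount]
    · simp [pathCount, sub_eq_zero, hjk]
  | succ m ih =>
    intro hm j
    set v := (jacobiOp ω (fun _ => 0) ^ m) (Finsupp.single k 1)
    have hv := ih (by omega)
    -- the last step crosses the edge `{n, n + 1}` only from `i ∈ {n, n + 1}`, reached in `m` steps
    have edge (n i : ℕ) (hi : (pathCount m (i - k) : ℝ) ≠ 0) (hn : n ≤ i) (hi' : i ≤ n + 1) :
        √(ω n) ∈ Icc a b := by
      have := abs_le.mp (abs_le_of_pathCount_ne_zero (Nat.cast_ne_zero.mp hi))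
      exact hω n (by omega) (by omega)
    rw [pow_succ' (jacobiOp ω _), Module.End.mul_apply]
    rcases j with _ | j
    · have hfar : pathCount m ((0 : ℕ) - k - 1) = 0 := by
        by_contra h
        have := abs_le.mp (abs_le_of_pathCount_ne_zero h)
        omega
      rw [jacobiOp_apply_zero, pathCount, hfar,
        show ((0 : ℕ) : ℤ) - k + 1 = (1 : ℕ) - k by simp; ring]
      simpa using mul_mem_Icc_mul_pow_succ (by positivity) ha (Real.sqrt_nonneg _)
        (edge 0 1 · (by omega) le_rfl) (hv 1)
    · rw [jacobiOp_apply_succ, pathCount,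
        show ((j + 1 : ℕ) : ℤ) - k - 1 = (j : ℕ) - k by push_cast; ring,
        show ((j + 1 : ℕ) : ℤ) - k + 1 = (j + 2 : ℕ) - k by push_cast; ring]
      have hdown := mul_mem_Icc_mul_pow_succ (by positivity) ha (Real.sqrt_nonneg _)
        (edge j j · le_rfl (by omega)) (hv j)
      have hup := mul_mem_Icc_mul_pow_succ (by positivity) ha (Real.sqrt_nonneg _)
        (edge (j + 1) (j + 2) · (by omega) le_rfl) (hv (j + 2))
      simpa [add_mul] using Icc_add_Icc_subset _ _ _ _ (add_mem_add hdown hup)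

theorem harmonicOscillator_pow_single_apply_self_mem_Icc {m k : ℕ} (hmk : m ≤ k) :
    (jacobiOp (fun n => (n : ℝ) + 1) (fun _ => 0) ^ m) (Finsupp.single k 1) k ∈
      Icc (pathCount m 0 * √(k + (1 - m : ℝ)) ^ m) (pathCount m 0 * √(k + (m : ℝ)) ^ m) := by
  have hω (n : ℕ) (hn : k ≤ n + m) (hn' : n < k + m) :
      √((n : ℝ) + 1) ∈ Icc √(k + (1 - m : ℝ)) √(k + (m : ℝ)) := by
    have : (k : ℝ) ≤ n + m := by exact_mod_cast hn
    have : (n : ℝ) + 1 ≤ k + m := by exact_mod_cast hn'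
    exact ⟨Real.sqrt_le_sqrt (by linarith), Real.sqrt_le_sqrt (by linarith)⟩
  simpa using jacobiOp_pow_single_apply_mem_Icc (Real.sqrt_nonneg _) hmk hω m le_rfl k

theorem tendsto_sqrt_add_div_sqrt_two_mul_add_one (r : ℝ) :
    Tendsto (fun k : ℕ => √(k + r) / √(2 * k + 1)) atTop (nhds (√2)⁻¹) := by
  have hratio : Tendsto (fun k : ℕ => (k + r) / (2 * k + 1)) atTop (nhds (1 / 2)) := by
    have h := ((tendsto_const_nhds (x := (1 : ℝ))).add
      ((tendsto_const_nhds (x := r)).mul tendsto_one_div_atTop_nhds_zero_nat)).div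
      ((tendsto_const_nhds (x := (2 : ℝ))).add tendsto_one_div_atTop_nhds_zero_nat)
      (by norm_num)
    simp only [mul_zero, add_zero] at h
    refine h.congr' ?_
    filter_upwards [eventually_ne_atTop 0] with k hk
    simp only [Pi.div_apply]
    field_simp
  have h := hratio.sqrt
  rw [Real.sqrt_div' _ zero_le_two, Real.sqrt_one, one_div] at h
  exact h.congr fun k => Real.sqrt_div' _ (by positivity)

theorem Function.Odd.intervalIntegral_neg_eq_zero {E : Type*} [NormedAddCommGroup E]
    [NormedSpace ℝ E] {f : ℝ → E} (hf : Function.Odd f) (a : ℝ) : ∫ x in -a..a, f x = 0 := by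
  have h := intervalIntegral.integral_comp_neg (a := -a) (b := a) f
  simp only [hf _, intervalIntegral.integral_neg, neg_neg] at h
  have h2 : (2 : ℝ) • ∫ x in -a..a, f x = 0 := by rw [two_smul]; exact neg_eq_iff_add_eq_zero.mp h
  exact (smul_eq_zero.mp h2).resolve_left two_ne_zero

theorem integral_sin_pow_two_mul_neg_pi_div_two (p : ℕ) :
    ∫ x in -(π / 2)..π / 2, sin x ^ (2 * p) = π * (2 * p).choose p / 4 ^ p := by
  induction p with
  | zero => simp
  | succ p ih =>
    rw [mul_add_one, integral_sin_pow, ih, cos_pi_div_two, cos_neg, cos_pi_div_two]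
    have hchoose :
        ((p : ℝ) + 1) * (2 * (p + 1)).choose (p + 1) = 2 * (2 * p + 1) * (2 * p).choose p := by
      rw [← Nat.centralBinom_eq_two_mul_choose, ← Nat.centralBinom_eq_two_mul_choose]
      exact_mod_cast Nat.succ_mul_centralBinom_succ p
    field_simp
    push_cast at hchoose ⊢
    linear_combination (-2 * π * 4 ^ p) * hchoose

theorem integral_arcsine_pow_eq_integral_sin_pow (n : ℕ) :
    ∫ x in -√2..√2, x ^ n / (π * √(2 - x ^ 2)) =
      √2 ^ n / π * ∫ θ in -(π / 2)..π / 2, sin θ ^ n := by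
  have hsqrt2 : (0 : ℝ) < √2 := by positivity
  have himage : (fun θ => √2 * sin θ) '' Ioo (-(π / 2)) (π / 2) = Ioo (-√2) √2 := by
    have hsin : sin '' Ioo (-(π / 2)) (π / 2) = Ioo (-1) 1 :=
      sinPartialHomeomorph.image_source_eq_target
    rw [← image_image (√2 * ·), hsin]
    simpa using image_mul_left_Ioo hsqrt2 (-1) 1
  have hinj : InjOn (fun θ => √2 * sin θ) (Ioo (-(π / 2)) (π / 2)) := fun x hx y hy hxy =>
    injOn_sin (Ioo_subset_Icc_self hx) (Ioo_subset_Icc_self hy) (mul_left_cancel₀ hsqrt2.ne' hxy)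
  have hderiv (θ : ℝ) : HasDerivAt (fun θ => √2 * sin θ) (√2 * cos θ) θ :=
    (hasDerivAt_sin θ).const_mul _
  have hintegrand : ∀ θ ∈ Ioo (-(π / 2)) (π / 2),
      |√2 * cos θ| • ((√2 * sin θ) ^ n / (π * √(2 - (√2 * sin θ) ^ 2))) =
        √2 ^ n / π * sin θ ^ n := by
    intro θ hθ
    have hcos : 0 < cos θ := cos_pos_of_mem_Ioo hθ
    have hroot : √(2 - (√2 * sin θ) ^ 2) = √2 * cos θ := by
      rw [mul_pow, Real.sq_sqrt zero_le_two, show 2 - 2 * sin θ ^ 2 = 2 * cos θ ^ 2 by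
        rw [cos_sq']; ring, Real.sqrt_mul zero_le_two, Real.sqrt_sq hcos.le]
    rw [hroot, abs_of_pos (by positivity), smul_eq_mul, mul_pow]
    field_simp
  rw [intervalIntegral.integral_of_le (by linarith), integral_Ioc_eq_integral_Ioo, ← himage,
    integral_image_eq_integral_abs_deriv_smul measurableSet_Ioo
      (fun θ _ => (hderiv θ).hasDerivWithinAt) hinj,
    setIntegral_congr_fun measurableSet_Ioo hintegrand, integral_const_mul,
    intervalIntegral.integral_of_le (by linarith [pi_pos]), integral_Ioc_eq_integral_Ioo]

theorem integral_arcsine_pow (m : ℕ) :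
    ∫ x in -√2..√2, x ^ m / (π * √(2 - x ^ 2)) = pathCount m 0 * (√2)⁻¹ ^ m := by
  rw [integral_arcsine_pow_eq_integral_sin_pow]
  rcases Nat.even_or_odd m with ⟨p, rfl⟩ | hodd
  · have hsq : √2 ^ 2 = 2 := Real.sq_sqrt zero_le_two
    rw [← two_mul, integral_sin_pow_two_mul_neg_pi_div_two,
      show (0 : ℤ) = 2 * p - (2 * p : ℕ) by push_cast; ring, pathCount_two_mul_sub, pow_mul,
      pow_mul, inv_pow, hsq, inv_pow, show (4 : ℝ) ^ p = 2 ^ p * 2 ^ p by rw [← mul_pow]; norm_num]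
    field_simp
  · have hsin_odd : Function.Odd fun θ => sin θ ^ m := fun θ => by simp [hodd.neg_pow]
    rw [hsin_odd.intervalIntegral_neg_eq_zero,
      pathCount_eq_zero_of_odd (by simpa using (Int.odd_coe_nat m).mpr hodd)]
    simp

theorem harmonicOscillator_classical_limit_arcsine (m : ℕ) :
    Tendsto
      (fun k : ℕ =>
        ((jacobiOp (fun n => (n : ℝ) + 1) (fun _ => 0) ^ m) (Finsupp.single k 1)) k /
          Real.sqrt (2 * (k : ℝ) + 1) ^ m)
      atTop
      (nhds (∫ x in (-Real.sqrt 2)..(Real.sqrt 2), x ^ m / (Real.pi * Real.sqrt (2 - x ^ 2)))) := by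
  rw [integral_arcsine_pow]
  have hlim (r : ℝ) := ((tendsto_sqrt_add_div_sqrt_two_mul_add_one r).pow m).const_mul
    (pathCount m 0 : ℝ)
  refine tendsto_of_tendsto_of_tendsto_of_le_of_le' (hlim (1 - m)) (hlim m) ?_ ?_ <;>
    filter_upwards [eventually_ge_atTop m] with k hk <;>
    rw [div_pow, ← mul_div_assoc] <;>
    gcongr
  exacts [(harmonicOscillator_pow_single_apply_self_mem_Icc hk).1,
    (harmonicOscillator_pow_single_apply_self_mem_Icc hk).2]
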